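/- For every integer n ≥ 2, the action of SL(2,ℂ) on R_{n−1} is irreducible: the only ℂ-subspaces of R_{n−1} invariant under the action of every element of SL(2,ℂ) are 0 and R_{n−1}. -/

import Mathlib

/-!
The torus `diag(t⁻¹, t)` acts diagonally on the monomial basis with pairwise distinct characters,
and the unipotents `[[1, b], [0, 1]]`, `[[1, 0], [c, 1]]` send a vector to a polynomial in `b`
(resp. `c`). A subspace containing every value of a polynomial curve contains its coefficients
(invert a Vandermonde matrix). Hence a nonzero invariant subspace contains a monomial
`X^i Y^(n-1-i)`, then `Y^(n-1)`, the top coefficient of `(X - bY)^i Y^(n-1-i)`, and then every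
monomial, since all coefficients of `(Y - cX)^(n-1)` are nonzero binomials.
-/

/-- The matrix (in the ordered basis `X^(l-1) Y^(n-l)`, `1 ≤ l ≤ n`, of homogeneous
polynomials of degree `n-1`) of the action of `A = [[a,b],[c,d]]` determined by
`A · X = d X - b Y` and `A · Y = -c X + a Y`. -/
noncomputable def rn (n : ℕ) (A : Matrix (Fin 2) (Fin 2) ℂ) : Matrix (Fin n) (Fin n) ℂ :=
  Matrix.of fun j l =>
    ((Polynomial.C (A 1 1) * Polynomial.X - Polynomial.C (A 0 1)) ^ (l : ℕ) *
      (Polynomial.C (-A 1 0) * Polynomial.X + Polynomial.C (A 0 0)) ^ (n - 1 - (l : ℕ))).coeff j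

open Polynomial Matrix

namespace Submodule

variable {K V : Type*} [Field K] [AddCommGroup V] [Module K V]

theorem mem_of_forall_sum_pow_smul_mem (W : Submodule K V) {N : ℕ} {s : Fin N → K}
    (hs : Function.Injective s) {v : Fin N → V}
    (h : ∀ k, ∑ i : Fin N, s k ^ (i : ℕ) • v i ∈ W) (i : Fin N) : v i ∈ W := by
  set M := vandermonde s
  have hM : M⁻¹ * M = 1 :=
    nonsing_inv_mul M (isUnit_iff_ne_zero.2 (det_vandermonde_ne_zero_iff.2 hs))
  have hrow : ∀ j : Fin N, ∑ k, M⁻¹ i k * s k ^ (j : ℕ) = (1 : Matrix (Fin N) (Fin N) K) i j := by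
    intro j; rw [← hM]; rfl
  have hv : v i = ∑ k, M⁻¹ i k • ∑ j : Fin N, s k ^ (j : ℕ) • v j := by
    simp_rw [Finset.smul_sum, smul_smul]
    rw [Finset.sum_comm]
    simp_rw [← Finset.sum_smul, hrow, one_apply, ite_smul, one_smul, zero_smul]
    simp
  rw [hv]
  exact sum_mem fun k _ => smul_mem _ _ (h k)

theorem single_one_mem_of_forall_pow_mul_mem {ι : Type*} [Fintype ι] [DecidableEq ι]
    (W : Submodule K (ι → K)) {N : ℕ} {s : Fin N → K} (hs : Function.Injective s)
    {m : ι → ℕ} (hm : ∀ j, m j < N) {a : ι → K} (h : ∀ k, (fun j => s k ^ m j * a j) ∈ W)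
    {i : ι} (hai : a i ≠ 0) (hi : ∀ j, m j = m i → a j ≠ 0 → j = i) :
    Pi.single i 1 ∈ W := by
  let v : Fin N → ι → K := fun e j => if m j = e then a j else 0
  have hv : ∀ k, ∑ e : Fin N, s k ^ (e : ℕ) • v e = fun j => s k ^ m j * a j := by
    intro k; funext j
    rw [Finset.sum_apply, Finset.sum_eq_single ⟨m j, hm j⟩]
    · simp [v]
    · intro e _ he
      simp [v, Ne.symm (Fin.val_ne_of_ne he)]
    · simp
  have hvi : v ⟨m i, hm i⟩ = Pi.single i (a i) := by
    funext j
    by_cases hj : j = i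
    · subst hj; simp [v]
    · simp only [v, Pi.single_apply, hj, if_false]
      split_ifs with hmj
      · by_contra ha; exact hj (hi j hmj ha)
      · rfl
  have hsingle := W.mem_of_forall_sum_pow_smul_mem hs (fun k => (hv k).symm ▸ h k) ⟨m i, hm i⟩
  rw [hvi] at hsingle
  simpa [← Pi.single_smul', hai] using W.smul_mem (a i)⁻¹ hsingle

theorem eq_top_of_forall_single_one_mem {R ι : Type*} [Semiring R] [Finite ι] [DecidableEq ι]
    (W : Submodule R (ι → R)) (h : ∀ i, Pi.single i 1 ∈ W) : W = ⊤ :=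
  eq_top_iff.2 <| (Pi.basisFun R ι).span_eq.ge.trans <|
    span_le.2 <| Set.range_subset_iff.2 fun i => by simpa using h i

end Submodule

theorem rn_diagonal (n : ℕ) (t : ℂ) :
    rn n !![t⁻¹, 0; 0, t] = diagonal fun l : Fin n => t ^ (l : ℕ) * t⁻¹ ^ (n - 1 - l) := by
  ext j l
  have h : (C t * X - C 0) ^ (l : ℕ) * (C (-0) * X + C t⁻¹) ^ (n - 1 - l) =
      C (t ^ (l : ℕ) * t⁻¹ ^ (n - 1 - l)) * X ^ (l : ℕ) := by
    simp only [neg_zero, map_zero, sub_zero, zero_mul, zero_add, C_mul, C_pow]; ring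
  simp only [rn, of_apply, cons_val', cons_val_zero, cons_val_one, empty_val', cons_val_fin_one,
    diagonal_apply, h, coeff_C_mul_X_pow, Fin.ext_iff]
  split_ifs with hjl <;> simp [hjl]

theorem rn_upper_apply (n : ℕ) (b : ℂ) (j l : Fin n) :
    rn n !![1, b; 0, 1] j l = (-b) ^ (l - j : ℕ) * (l.val.choose j : ℂ) := by
  simp [rn, sub_eq_add_neg, ← map_neg, coeff_X_add_C_pow]

theorem rn_lower_apply_zero (n : ℕ) (hn : 0 < n) (c : ℂ) (j : Fin n) :
    rn n !![1, 0; c, 1] j ⟨0, hn⟩ = (-c) ^ (j : ℕ) * ((n - 1).choose j : ℂ) := by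
  have h : C (-c) * X + C 1 = (X + 1 : ℂ[X]).comp (C (-c) * X) := by simp [add_comm]
  simp only [rn, of_apply, cons_val', cons_val_zero, cons_val_one, empty_val', cons_val_fin_one,
    pow_zero, one_mul, Nat.sub_zero, h, ← pow_comp, comp_C_mul_X_coeff, coeff_X_add_one_pow]
  ring

section InvariantSubspace

variable {n : ℕ} (W : Submodule ℂ (Fin n → ℂ))

theorem exists_single_one_mem_of_rn_diagonal_stable
    (hW : ∀ t : ℂ, t ≠ 0 → ∀ w ∈ W, rn n !![t⁻¹, 0; 0, t] *ᵥ w ∈ W) (hne : W ≠ ⊥) :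
    ∃ i, Pi.single i 1 ∈ W := by
  obtain ⟨w, hw, hw0⟩ := W.ne_bot_iff.1 hne
  obtain ⟨i, hi⟩ := Function.ne_iff.1 hw0
  refine ⟨i, W.single_one_mem_of_forall_pow_mul_mem (s := fun k : Fin n => ((k : ℂ) + 1) ^ 2)
    ?_ (m := fun j => j) (fun j => j.isLt) (a := w) (fun k => ?_) hi fun j hj _ => Fin.ext hj⟩
  · intro k k' h
    simp only at h
    have h' : ((k : ℕ) + 1) ^ 2 = ((k' : ℕ) + 1) ^ 2 := by exact_mod_cast h
    exact Fin.ext (by simpa using Nat.pow_left_injective two_ne_zero h')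
  · have ht : (k : ℂ) + 1 ≠ 0 := Nat.cast_add_one_ne_zero k
    -- for `t = k + 1`, scaling by `t ^ (n - 1)` turns the character `t ^ (2 j - (n - 1))` into `(t ^ 2) ^ j`
    convert W.smul_mem (((k : ℂ) + 1) ^ (n - 1)) (hW _ ht w hw) using 1
    funext j
    simp only [rn_diagonal, Pi.smul_apply, mulVec_diagonal, smul_eq_mul]
    obtain ⟨d, hd⟩ : ∃ d, n - 1 = j + d := ⟨n - 1 - j, by omega⟩
    rw [hd, Nat.add_sub_cancel_left, pow_add, inv_pow, sq, mul_pow]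
    field_simp

theorem single_zero_mem_of_rn_upper_stable
    (hW : ∀ b : ℂ, ∀ w ∈ W, rn n !![1, b; 0, 1] *ᵥ w ∈ W) {i : Fin n}
    (hi : Pi.single i 1 ∈ W) : Pi.single ⟨0, i.pos⟩ 1 ∈ W := by
  refine W.single_one_mem_of_forall_pow_mul_mem (s := fun k : Fin n => (k : ℂ))
    (Nat.cast_injective.comp Fin.val_injective) (m := fun j : Fin n => i - j) (fun j => by omega)
    (a := fun j => ((i : ℕ).choose j : ℂ)) (fun k => ?_) (by simp) ?_
  · convert hW (-k) _ hi using 1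
    funext j
    simp [rn_upper_apply]
  · intro j hj hne
    have hji : (j : ℕ) ≤ i := by
      by_contra h
      exact hne (by simp [Nat.choose_eq_zero_of_lt (not_le.1 h)])
    exact Fin.ext (by simp only at hj ⊢; omega)

theorem single_one_mem_of_rn_lower_stable
    (hW : ∀ c : ℂ, ∀ w ∈ W, rn n !![1, 0; c, 1] *ᵥ w ∈ W) (hn : 0 < n)
    (h0 : Pi.single ⟨0, hn⟩ 1 ∈ W) (i : Fin n) : Pi.single i 1 ∈ W := by
  refine W.single_one_mem_of_forall_pow_mul_mem (s := fun k : Fin n => (k : ℂ))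
    (Nat.cast_injective.comp Fin.val_injective) (m := fun j : Fin n => j) (fun j => j.isLt)
    (a := fun j => ((n - 1).choose j : ℂ)) (fun k => ?_) ?_ fun j hj _ => Fin.ext hj
  · convert hW (-k) _ h0 using 1
    funext j
    simp [rn_lower_apply_zero]
  · exact_mod_cast (Nat.choose_pos (by omega)).ne'

end InvariantSubspace

theorem rn_irreducible_general (n : ℕ) (W : Submodule ℂ (Fin n → ℂ))
    (hW : ∀ A : Matrix.SpecialLinearGroup (Fin 2) ℂ, ∀ w ∈ W,
      (rn n (A : Matrix (Fin 2) (Fin 2) ℂ)).mulVec w ∈ W) :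
    W = ⊥ ∨ W = ⊤ := by
  refine or_iff_not_imp_left.2 fun hne => ?_
  have hSL (A : Matrix (Fin 2) (Fin 2) ℂ) (hA : A.det = 1) : ∀ w ∈ W, rn n A *ᵥ w ∈ W :=
    hW ⟨A, hA⟩
  obtain ⟨i, hi⟩ := exists_single_one_mem_of_rn_diagonal_stable W
    (fun t ht => hSL _ (by simp [det_fin_two_of, ht])) hne
  have h0 := single_zero_mem_of_rn_upper_stable W (fun b => hSL _ (by simp [det_fin_two_of])) hi
  exact W.eq_top_of_forall_single_one_mem
    (single_one_mem_of_rn_lower_stable W (fun c => hSL _ (by simp [det_fin_two_of])) _ h0)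

/-- For every `n ≥ 2`, the action of `SL(2,ℂ)` on the homogeneous polynomials of degree
`n-1` (identified with `ℂⁿ` via the monomial basis, the action of `A` being `rₙ(A)`) is
irreducible: the only invariant subspaces are `0` and the whole space. -/
theorem rn_irreducible (n : ℕ) (hn : 2 ≤ n) (W : Submodule ℂ (Fin n → ℂ))
    (hW : ∀ A : Matrix.SpecialLinearGroup (Fin 2) ℂ, ∀ w ∈ W,
      (rn n (A : Matrix (Fin 2) (Fin 2) ℂ)).mulVec w ∈ W) :
    W = ⊥ ∨ W = ⊤ :=
  rn_irreducible_general n W hW
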